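/- Let Y_n be a Bernoulli random graph on n nodes with edge probability π_n = logit⁻¹(θ₀ − log n), θ₀ ∈ ℝ fixed, and let E_n denote its number of edges. Then the maximum likelihood estimator θ̂_n = logit(E_n / C(n,2)) + log n (defined when 0 < E_n < C(n,2)) converges in probability to θ₀ as n → ∞; i.e., the MLE of θ is consistent despite the model being non-projective. -/

import Mathlib

/-!
`E_n` has mean `μ_n = C(n,2) π_n ≥ (n - 1) e^{θ₀} / 4 → ∞` and variance at most `μ_n`, so by
Chebyshev the event `|E_n - μ_n| ≥ δ μ_n` has probability at most `1 / (δ² μ_n) → 0` for each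
fixed `δ > 0`. Once `x_n = θ₀ - log n ≤ 0`, shifting the argument of `logit⁻¹` by `±ε` moves its
value by at least the fraction `δ = (e^ε - 1) / (e^ε + 1)` of `π_n`; hence `|θ̂_n - θ₀| > ε`
forces a relative deviation `δ` of `E_n`, and so do `E_n = 0` and (as `π_n ≤ 1 / 2`)
`E_n = C(n,2)`, with `δ = 1`.
-/

open Filter

noncomputable def invlogit (x : ℝ) : ℝ := Real.exp x / (1 + Real.exp x)

noncomputable def logit (p : ℝ) : ℝ := Real.log (p / (1 - p))

open Classical in
/-- Probability that a Binomial(`m`,`p`) random variable lands in the set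
of outcomes satisfying `A`. -/
noncomputable def binomProb (m : ℕ) (p : ℝ) (A : ℕ → Prop) : ℝ :=
  ∑ k ∈ (Finset.range (m + 1)).filter A,
    (m.choose k : ℝ) * p ^ k * (1 - p) ^ (m - k)

open Real Topology

theorem binomial_variance (m : ℕ) (p : ℝ) :
    ∑ k ∈ Finset.range (m + 1),
        (m * p - k) ^ 2 * ((m.choose k : ℝ) * p ^ k * (1 - p) ^ (m - k))
      = m * p * (1 - p) := by
  simpa [Polynomial.eval_finsetSum, bernsteinPolynomial] using
    congrArg (Polynomial.eval p) (bernsteinPolynomial.variance (R := ℝ) m)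

section Binomial

variable {m : ℕ} {p : ℝ}

theorem binomial_weight_nonneg (hp0 : 0 ≤ p) (hp1 : p ≤ 1) (k : ℕ) :
    0 ≤ (m.choose k : ℝ) * p ^ k * (1 - p) ^ (m - k) := by
  have : 0 ≤ 1 - p := by linarith
  positivity

theorem binomProb_nonneg (hp0 : 0 ≤ p) (hp1 : p ≤ 1) (A : ℕ → Prop) :
    0 ≤ binomProb m p A :=
  Finset.sum_nonneg fun k _ => binomial_weight_nonneg hp0 hp1 k

theorem binomProb_le_of_le_abs_sub {t : ℝ} (hp0 : 0 ≤ p) (hp1 : p ≤ 1) (ht : 0 < t)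
    {A : ℕ → Prop} (hA : ∀ k ≤ m, A k → t ≤ |k - m * p|) :
    binomProb m p A ≤ m * p * (1 - p) / t ^ 2 := by
  classical
  rw [le_div_iff₀ (by positivity), ← binomial_variance, binomProb, Finset.sum_mul]
  calc _ ≤ ∑ k ∈ (Finset.range (m + 1)).filter A,
          (m * p - k) ^ 2 * ((m.choose k : ℝ) * p ^ k * (1 - p) ^ (m - k)) := by
        refine Finset.sum_le_sum fun k hk => ?_
        obtain ⟨hkm, hAk⟩ := Finset.mem_filter.mp hk
        have hdev := hA k (Nat.lt_succ_iff.mp (Finset.mem_range.mp hkm)) hAk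
        rw [mul_comm, ← sq_abs (m * p - k), abs_sub_comm]
        exact mul_le_mul_of_nonneg_right (pow_le_pow_left₀ ht.le hdev 2)
          (binomial_weight_nonneg hp0 hp1 k)
    _ ≤ _ := Finset.sum_le_sum_of_subset_of_nonneg (Finset.filter_subset _ _)
        fun k _ _ => mul_nonneg (sq_nonneg _) (binomial_weight_nonneg hp0 hp1 k)

end Binomial

theorem tendsto_binomProb_zero_of_mul_le_abs_sub {ι : Type*} {l : Filter ι} {m : ι → ℕ}
    {p : ι → ℝ} {A : ι → ℕ → Prop} {δ : ℝ} (hp0 : ∀ i, 0 ≤ p i) (hp1 : ∀ i, p i ≤ 1)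
    (hδ : 0 < δ)
    (hmean : Tendsto (fun i => m i * p i) l atTop)
    (hA : ∀ᶠ i in l, ∀ k ≤ m i, A i k → δ * (m i * p i) ≤ |k - m i * p i|) :
    Tendsto (fun i => binomProb (m i) (p i) (A i)) l (𝓝 0) := by
  refine squeeze_zero' (.of_forall fun i => binomProb_nonneg (hp0 i) (hp1 i) _) ?_
    (hmean.const_mul_atTop (pow_pos hδ 2)).inv_tendsto_atTop
  filter_upwards [hA, hmean.eventually_gt_atTop 0] with i hAi hpos
  calc binomProb (m i) (p i) (A i) ≤ m i * p i * (1 - p i) / (δ * (m i * p i)) ^ 2 :=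
        binomProb_le_of_le_abs_sub (hp0 i) (hp1 i) (by positivity) hAi
    _ ≤ m i * p i / (δ * (m i * p i)) ^ 2 := by
        have : 1 - p i ≤ 1 := by linarith [hp0 i]
        exact div_le_div_of_nonneg_right (mul_le_of_le_one_right hpos.le this) (by positivity)
    _ = (δ ^ 2 * (m i * p i))⁻¹ := by
        field_simp

section Logistic

theorem invlogit_pos (x : ℝ) : 0 < invlogit x := by
  unfold invlogit; positivity

theorem invlogit_lt_one (x : ℝ) : invlogit x < 1 := by
  unfold invlogit
  rw [div_lt_one (by positivity)]
  linarith

theorem invlogit_strictMono : StrictMono invlogit := fun a b hab => by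
  unfold invlogit
  rw [div_lt_div_iff₀ (by positivity) (by positivity)]
  nlinarith [exp_lt_exp.mpr hab]

theorem invlogit_logit {q : ℝ} (h0 : 0 < q) (h1 : q < 1) : invlogit (logit q) = q := by
  have h1q : 0 < 1 - q := by linarith
  unfold invlogit logit
  rw [exp_log (div_pos h0 h1q)]
  field_simp
  ring

theorem invlogit_le_half {x : ℝ} (hx : x ≤ 0) : invlogit x ≤ 1 / 2 := by
  unfold invlogit
  rw [div_le_iff₀ (by positivity)]
  linarith [exp_le_one_iff.mpr hx]

theorem exp_div_two_le_invlogit {x : ℝ} (hx : x ≤ 0) : exp x / 2 ≤ invlogit x := by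
  unfold invlogit
  gcongr
  linarith [exp_le_one_iff.mpr hx]

/- With `a = exp x ≤ 1` and `c = exp t`, both bounds reduce to
`(1 + a) (1 + c) - 2 (1 + a c) = (1 - a) (c - 1)`. -/
theorem two_mul_exp_div_mul_invlogit_le {x t : ℝ} (hx : x ≤ 0) (ht : 0 ≤ t) :
    2 * exp t / (1 + exp t) * invlogit x ≤ invlogit (x + t) := by
  have ha := exp_le_one_iff.mpr hx
  have hc := one_le_exp ht
  unfold invlogit
  rw [exp_add, div_mul_div_comm, div_le_div_iff₀ (by positivity) (by positivity)]
  nlinarith [mul_nonneg (sub_nonneg.mpr ha) (sub_nonneg.mpr hc), exp_pos x, exp_pos t,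
    mul_pos (exp_pos x) (exp_pos t)]

theorem invlogit_sub_le {x t : ℝ} (hx : x ≤ 0) (ht : 0 ≤ t) :
    invlogit (x - t) ≤ 2 / (1 + exp t) * invlogit x := by
  have ha := exp_le_one_iff.mpr hx
  have hc := one_le_exp ht
  unfold invlogit
  rw [exp_sub, div_mul_div_comm, div_le_div_iff₀ (by positivity) (by positivity)]
  field_simp
  nlinarith [mul_nonneg (sub_nonneg.mpr ha) (sub_nonneg.mpr hc), exp_pos x, exp_pos t,
    mul_pos (exp_pos x) (exp_pos t)]

theorem mul_invlogit_le_abs_sub_of_lt_abs_logit_sub {x ε q : ℝ} (hx : x ≤ 0) (hε : 0 ≤ ε)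
    (hq0 : 0 < q) (hq1 : q < 1) (h : ε < |logit q - x|) :
    (exp ε - 1) / (exp ε + 1) * invlogit x ≤ |q - invlogit x| := by
  have hq := invlogit_logit hq0 hq1
  rcases lt_abs.mp h with hup | hlo
  · have hlt : invlogit (x + ε) < q := hq ▸ invlogit_strictMono (by linarith)
    have hδ : (exp ε - 1) / (exp ε + 1) = 2 * exp ε / (1 + exp ε) - 1 := by
      field_simp; ring
    rw [hδ]
    linarith [two_mul_exp_div_mul_invlogit_le hx hε, le_abs_self (q - invlogit x)]
  · have hlt : q < invlogit (x - ε) := hq ▸ invlogit_strictMono (by linarith)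
    have hδ : (exp ε - 1) / (exp ε + 1) = 1 - 2 / (1 + exp ε) := by
      field_simp; ring
    rw [hδ]
    linarith [invlogit_sub_le hx hε, neg_abs_le (q - invlogit x)]

theorem mul_mul_invlogit_le_abs_sub_of_lt_abs_logit_div_sub {m k : ℕ} {x ε : ℝ} (hx : x ≤ 0)
    (hε : 0 ≤ ε) (hk0 : 0 < k) (hkm : k < m) (h : ε < |logit (k / m) - x|) :
    (exp ε - 1) / (exp ε + 1) * (m * invlogit x) ≤ |k - m * invlogit x| := by
  have hm : (0 : ℝ) < m := by exact_mod_cast hk0.trans hkm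
  have hq0 : (0 : ℝ) < k / m := div_pos (by exact_mod_cast hk0) hm
  have hq1 : (k : ℝ) / m < 1 := (div_lt_one hm).mpr (by exact_mod_cast hkm)
  calc _ = m * ((exp ε - 1) / (exp ε + 1) * invlogit x) := by ring
    _ ≤ |(m : ℝ)| * |k / m - invlogit x| := by
      rw [abs_of_pos hm]
      gcongr
      exact mul_invlogit_le_abs_sub_of_lt_abs_logit_sub hx hε hq0 hq1 h
    _ = |k - m * invlogit x| := by rw [← abs_mul, mul_sub, mul_div_cancel₀ _ hm.ne']

end Logistic

theorem mul_le_abs_sub_of_eq_zero_or_eq {m k : ℕ} {p : ℝ} (hp : p ≤ 1 / 2)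
    (hk : k = 0 ∨ k = m) : m * p ≤ |k - m * p| := by
  rcases hk with rfl | rfl
  · rw [Nat.cast_zero, zero_sub, abs_neg]
    exact le_abs_self _
  · have hm : (0 : ℝ) ≤ k := Nat.cast_nonneg _
    exact le_trans (by nlinarith) (le_abs_self _)

theorem eventually_sub_log_nonpos (θ₀ : ℝ) : ∀ᶠ n : ℕ in atTop, θ₀ - log n ≤ 0 :=
  ((tendsto_log_atTop.comp tendsto_natCast_atTop_atTop).eventually_ge_atTop θ₀).mono
    fun _ hn => sub_nonpos.mpr hn

theorem tendsto_choose_two_mul_invlogit_sub_log (θ₀ : ℝ) :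
    Tendsto (fun n : ℕ => (n.choose 2 : ℝ) * invlogit (θ₀ - log n)) atTop atTop := by
  refine tendsto_atTop_mono' atTop (f₁ := fun n : ℕ => exp θ₀ / 4 * ((n : ℝ) - 1)) ?_
    ((tendsto_atTop_add_const_right _ (-1) tendsto_natCast_atTop_atTop).const_mul_atTop
      (by positivity))
  filter_upwards [eventually_sub_log_nonpos θ₀, eventually_gt_atTop 0] with n hx hn
  have hn' : (1 : ℝ) ≤ n := by exact_mod_cast hn
  calc exp θ₀ / 4 * ((n : ℝ) - 1) = n * (n - 1) / 2 * (exp (θ₀ - log n) / 2) := by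
        rw [exp_sub, exp_log (by positivity)]
        field_simp
        ring
    _ ≤ (n.choose 2 : ℝ) * invlogit (θ₀ - log n) := by
        rw [Nat.cast_choose_two]
        have : 0 ≤ (n : ℝ) * (n - 1) / 2 := by nlinarith
        exact mul_le_mul_of_nonneg_left (exp_div_two_le_invlogit hx) this

/-- Consistency of the MLE in the (non-projective) offset Bernoulli model:
with `E_n ~ Binomial(C(n,2), logit⁻¹(θ₀ − log n))`, the estimator
`θ̂_n = logit(E_n/C(n,2)) + log n` converges in probability to `θ₀`:
for every `ε > 0`, the probability that `θ̂_n` is defined yet deviates from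
`θ₀` by more than `ε` tends to `0`, and the probability that `θ̂_n` is
undefined (`E_n ∈ {0, C(n,2)}`) also tends to `0`. -/
theorem offset_bernoulli_mle_consistent (θ₀ : ℝ) :
    ∀ ε : ℝ, 0 < ε →
      Tendsto (fun n : ℕ =>
          binomProb (n.choose 2) (invlogit (θ₀ - Real.log n))
            (fun k => 0 < k ∧ k < n.choose 2 ∧
              ε < |logit ((k : ℝ) / (n.choose 2 : ℝ)) + Real.log n - θ₀|))
        atTop (nhds 0) ∧
      Tendsto (fun n : ℕ =>
          binomProb (n.choose 2) (invlogit (θ₀ - Real.log n))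
            (fun k => k = 0 ∨ k = n.choose 2))
        atTop (nhds 0) := by
  intro ε hε
  have hp0 (n : ℕ) := (invlogit_pos (θ₀ - log n)).le
  have hp1 (n : ℕ) := (invlogit_lt_one (θ₀ - log n)).le
  have hmean := tendsto_choose_two_mul_invlogit_sub_log θ₀
  have hδ : 0 < (exp ε - 1) / (exp ε + 1) :=
    div_pos (by linarith [add_one_lt_exp hε.ne']) (by positivity)
  refine ⟨tendsto_binomProb_zero_of_mul_le_abs_sub hp0 hp1 hδ hmean ?_,
    tendsto_binomProb_zero_of_mul_le_abs_sub hp0 hp1 one_pos hmean ?_⟩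
  · filter_upwards [eventually_sub_log_nonpos θ₀] with n hx
    rintro k - ⟨hk0, hkm, hdev⟩
    exact mul_mul_invlogit_le_abs_sub_of_lt_abs_logit_div_sub hx hε.le hk0 hkm
      (by convert hdev using 2; ring)
  · filter_upwards [eventually_sub_log_nonpos θ₀] with n hx
    rintro k - hk
    rw [one_mul]
    exact mul_le_abs_sub_of_eq_zero_or_eq (invlogit_le_half hx) hk
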